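/- arXiv:1405.1899 — 2 statements merged into one kernel-verified Lean document; each statement's English description precedes it below -/
import Mathlib

section
/- Suppose that T is a subgroup of a finite group H such that its normal closure ⟨T^H⟩ is equal to an (internal) direct product of conjugates of T, say ⟨T^H⟩ = T^{x_1} × ... × T^{x_n}, such that every conjugate of T appears among these factors (i.e. T^y ∈ {T^{x_1}, ..., T^{x_n}} for every y ∈ H), and suppose H = F*(H)⟨T^H⟩. Then either T is normal in H, or T is a p-group for some prime p. -/
open Subgroup

/-- The conjugate of a subgroup: `S ^ g = { g s g⁻¹ }`. -/
def conjSubgroup {G : Type*} [Group G] (g : G) (S : Subgroup G) : Subgroup G :=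
  S.map (MulAut.conj g).toMonoidHom

/-- A subgroup is subnormal if it can be joined to the whole group by a chain
of successive normal inclusions. -/
def Subgroup.IsSubnormal' {G : Type*} [Group G] (H : Subgroup G) : Prop :=
  ∃ (n : ℕ) (c : Fin (n + 1) → Subgroup G), c 0 = H ∧ c (Fin.last n) = ⊤ ∧
    ∀ i : Fin n, c i.castSucc ≤ c i.succ ∧
      ∀ x ∈ c i.succ, ∀ h ∈ c i.castSucc, x * h * x⁻¹ ∈ c i.castSucc

/-- A group is quasisimple if it is perfect and its central quotient is a
nonabelian simple group. -/
def IsQuasisimple (Q : Type*) [Group Q] : Prop :=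
  commutator Q = ⊤ ∧ IsSimpleGroup (Q ⧸ Subgroup.center Q) ∧
    ∃ a b : Q ⧸ Subgroup.center Q, a * b ≠ b * a

/-- The Fitting subgroup: the product (join) of all nilpotent normal subgroups. -/
def fittingSubgroup (G : Type*) [Group G] : Subgroup G :=
  sSup {H : Subgroup G | H.Normal ∧ Group.IsNilpotent H}

/-- The generalized Fitting subgroup `F*(G)`: the product of the Fitting subgroup
and all subnormal quasisimple subgroups. -/
def generalizedFitting (G : Type*) [Group G] : Subgroup G :=
  fittingSubgroup G ⊔ sSup {Q : Subgroup G | Q.IsSubnormal' ∧ IsQuasisimple Q}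

open scoped Classical in
/-- The generalized Fitting series, `F*_0(G) = 1` and `F*_{i+1}(G)` the preimage
of `F*(G / F*_i(G))`. (The terms of the series are indeed normal, so the `⊤`
default branch is never taken.) -/
noncomputable def generalizedFittingSeries (G : Type*) [Group G] : ℕ → Subgroup G
  | 0 => ⊥
  | n + 1 =>
    if h : (generalizedFittingSeries G n).Normal then
      letI := h
      (generalizedFitting (G ⧸ generalizedFittingSeries G n)).comap
        (QuotientGroup.mk' (generalizedFittingSeries G n))
    else ⊤

/-- The generalized Fitting height `h*(G)`: the least `h` with `F*_h(G) = G`. -/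
noncomputable def generalizedFittingHeight (G : Type*) [Group G] : ℕ :=
  sInf {h : ℕ | generalizedFittingSeries G h = ⊤}

open scoped Classical in
/-- The Fitting series. -/
noncomputable def fittingSeries (G : Type*) [Group G] : ℕ → Subgroup G
  | 0 => ⊥
  | n + 1 =>
    if h : (fittingSeries G n).Normal then
      letI := h
      (fittingSubgroup (G ⧸ fittingSeries G n)).comap
        (QuotientGroup.mk' (fittingSeries G n))
    else ⊤

/-- The Fitting height. -/
noncomputable def fittingHeight (G : Type*) [Group G] : ℕ :=
  sInf {h : ℕ | fittingSeries G h = ⊤}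

/-- The derived length: the least `n` with `G^{(n)} = 1`. -/
noncomputable def derivedLength (G : Type*) [Group G] : ℕ :=
  sInf {n : ℕ | derivedSeries G n = ⊥}

/-- The soluble radical: the product (join) of all soluble normal subgroups. -/
def solubleRadical (G : Type*) [Group G] : Subgroup G :=
  sSup {H : Subgroup G | H.Normal ∧ IsSolvable H}

/-- A group is an (internal) direct product of nonabelian simple groups. -/
def IsProdOfNonabelianSimples (Q : Type*) [Group Q] : Prop :=
  ∃ (m : ℕ) (S : Fin m → Subgroup Q),
    (∀ i, (S i).Normal) ∧ (∀ i, IsSimpleGroup (S i)) ∧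
    (∀ i, ∃ a b : S i, a * b ≠ b * a) ∧
    iSupIndep S ∧ iSup S = ⊤

/-- The section `M/N` (for `N ≤ M` with `N.subgroupOf M` normal) is soluble. -/
def SectionIsSolvable {G : Type*} [Group G] (N M : Subgroup G) : Prop :=
  N ≤ M ∧ ∃ _h : (N.subgroupOf M).Normal, IsSolvable (M ⧸ N.subgroupOf M)

/-- The section `M/N` is a direct product of nonabelian simple groups. -/
def SectionIsProdOfNonabelianSimples {G : Type*} [Group G] (N M : Subgroup G) : Prop :=
  N ≤ M ∧ ∃ _h : (N.subgroupOf M).Normal,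
    IsProdOfNonabelianSimples (M ⧸ N.subgroupOf M)

/-- The nonsoluble length `λ(G)`: the least number of nonsoluble factors in a
normal series each of whose factors either is soluble or is a direct product of
nonabelian simple groups. -/
noncomputable def nonsolubleLength (G : Type*) [Group G] : ℕ :=
  sInf {n : ℕ | ∃ (k : ℕ) (N : Fin (k + 1) → Subgroup G), Monotone N ∧
    N 0 = ⊥ ∧ N (Fin.last k) = ⊤ ∧ (∀ i, (N i).Normal) ∧
    (∀ i : Fin k, SectionIsSolvable (N i.castSucc) (N i.succ) ∨
      SectionIsProdOfNonabelianSimples (N i.castSucc) (N i.succ)) ∧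
    n = Nat.card {i : Fin k // ¬ SectionIsSolvable (N i.castSucc) (N i.succ)}}

/-!
Let `K = N_H(T)` and suppose `K ≠ H`. Distinct conjugates of `T` commute, so `⟨T^H⟩ ≤ K`, and
a component of `H` either lies in the normal subgroup `⟨T^H⟩` or centralizes it, so it lies in
`K` as well. As `H = F*(H)⟨T^H⟩`, the Fitting subgroup is not contained in `K`, hence neither
is some normal `p`-subgroup `P`. For `g ∈ P \ K` the conjugate `T^g` is a factor other than `T`:
it commutes with `T` and meets it trivially. For `t ∈ T` the element `t⁻¹ t^g = ⁅t⁻¹, g⁆` lies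
in `P`, so `1 = (t⁻¹ t^g)^(p^k) = t^(-p^k) (t^(p^k))^g`, which puts `t^(p^k)` in `T ∩ T^g = 1`.
-/

section Conjugates

variable {G : Type*} [Group G]

lemma conj_mem_conjSubgroup {S : Subgroup G} {s : G} (g : G) (hs : s ∈ S) :
    g * s * g⁻¹ ∈ conjSubgroup g S :=
  mem_map_of_mem _ hs

@[simp]
lemma conjSubgroup_one (S : Subgroup G) : conjSubgroup 1 S = S := by
  ext; simp [conjSubgroup]

lemma mem_normalizer_of_conjSubgroup_eq [Finite G] {S : Subgroup G} {g : G}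
    (h : conjSubgroup g S = S) : g ∈ normalizer (S : Set G) :=
  mem_normalizer_fintype fun _ hs => h ▸ conj_mem_conjSubgroup g hs

lemma normalClosure_le_normalizer_of_eq_iSup {ι : Type*} {T : Subgroup G} {U : ι → Subgroup G}
    (hclosure : normalClosure (T : Set G) = ⨆ i, U i) (hU : ∀ i, U i = T ∨ U i ≤ centralizer T) :
    normalClosure (T : Set G) ≤ normalizer (T : Set G) :=
  hclosure ▸ iSup_le fun i => (hU i).elim (fun h => h ▸ le_normalizer)
    fun h => h.trans (centralizer_le_normalizer _)

end Conjugates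

section Components

variable {G : Type*} [Group G]

lemma IsQuasisimple.le_center_of_normal {Q : Type*} [Group Q] (hQ : IsQuasisimple Q)
    {A : Subgroup Q} [hA : A.Normal] (hA_ne : A ≠ ⊤) : A ≤ center Q := by
  obtain ⟨hperfect, hsimple, -⟩ := hQ
  have hmap : (A.map (QuotientGroup.mk' (center Q))).Normal :=
    hA.map _ (QuotientGroup.mk'_surjective _)
  rcases hmap.eq_bot_or_eq_top with hbot | htop
  · rwa [Subgroup.map_eq_bot_iff, QuotientGroup.ker_mk'] at hbot
  · have hsup : A ⊔ center Q = ⊤ := by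
      simpa [comap_map_eq] using congrArg (comap (QuotientGroup.mk' (center Q))) htop
    -- `Q / A` is an image of the abelian group `Z(Q)`, so `Q = ⁅Q, Q⁆ ≤ A`
    exact absurd (top_le_iff.mp (hperfect ▸
      Normal.commutator_le_of_self_sup_commutative_eq_top hsup inferInstance)) hA_ne

lemma IsQuasisimple.commutator_self {Q : Subgroup G} (hQ : IsQuasisimple Q) : ⁅Q, Q⁆ = Q :=
  isPerfect_iff.mp (Group.isPerfect_def.mpr hQ.1)

lemma IsQuasisimple.commutator_inf_self_eq_bot {Q N : Subgroup G} [N.Normal]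
    (hQ : IsQuasisimple Q) (hQN : ¬ Q ≤ N) : ⁅Q, N ⊓ Q⁆ = ⊥ := by
  have hcenter := hQ.le_center_of_normal (A := N.subgroupOf Q) (mt subgroupOf_eq_top.mp hQN)
  rw [commutator_comm, commutator_eq_bot_iff_le_centralizer]
  intro a ⟨haN, haQ⟩
  exact mem_centralizer_iff.mpr fun q hq =>
    congrArg Subtype.val
      (mem_center_iff.mp (hcenter (show ⟨a, haQ⟩ ∈ N.subgroupOf Q from haN)) ⟨q, hq⟩)

lemma commutator_inf_eq_bot_of_normalizes {Q K L N : Subgroup G} [hN : N.Normal]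
    (hQ : ⁅Q, Q⁆ = Q) (hQK : Q ≤ K) (hLK : ∀ x ∈ L, ∀ k ∈ K, x * k * x⁻¹ ∈ K)
    (hK : ⁅Q, N ⊓ K⁆ = ⊥) : ⁅Q, N ⊓ L⁆ = ⊥ := by
  have hle : ⁅Q, N ⊓ L⁆ ≤ N ⊓ K := by
    rw [commutator_le]
    intro q hq b ⟨hbN, hbL⟩
    rw [commutatorElement_def]
    refine ⟨N.mul_mem (hN.conj_mem b hbN q) (N.inv_mem hbN), ?_⟩
    rw [mul_assoc q, mul_assoc q]
    exact K.mul_mem (hQK hq) (hLK b hbL _ (K.inv_mem (hQK hq)))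
  have h₁ : ⁅⁅Q, N ⊓ L⁆, Q⁆ = ⊥ := by
    rw [eq_bot_iff, ← hK, commutator_comm Q (N ⊓ K)]
    exact commutator_mono hle le_rfl
  have h₂ : ⁅⁅N ⊓ L, Q⁆, Q⁆ = ⊥ := by rwa [commutator_comm (N ⊓ L)]
  simpa only [hQ] using commutator_commutator_eq_bot_of_rotate h₁ h₂

lemma IsQuasisimple.commutator_eq_bot_of_isSubnormal' {Q N : Subgroup G} [N.Normal]
    (hQ : IsQuasisimple Q) (hsn : Q.IsSubnormal') (hQN : ¬ Q ≤ N) : ⁅Q, N⁆ = ⊥ := by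
  obtain ⟨n, c, hc0, hclast, hchain⟩ := hsn
  have key : ∀ i, Q ≤ c i ∧ ⁅Q, N ⊓ c i⁆ = ⊥ := by
    intro i
    induction i using Fin.induction with
    | zero =>
      rw [hc0]
      exact ⟨le_rfl, hQ.commutator_inf_self_eq_bot hQN⟩
    | succ i ih =>
      have hstep := hchain i
      exact ⟨ih.1.trans hstep.1,
        commutator_inf_eq_bot_of_normalizes hQ.commutator_self ih.1 hstep.2 ih.2⟩
  simpa [hclast] using (key (Fin.last n)).2

lemma IsQuasisimple.le_or_le_centralizer_of_isSubnormal' {Q : Subgroup G} (hQ : IsQuasisimple Q)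
    (hsn : Q.IsSubnormal') (N : Subgroup G) [N.Normal] : Q ≤ N ∨ Q ≤ centralizer N :=
  or_iff_not_imp_left.mpr fun hQN =>
    commutator_eq_bot_iff_le_centralizer.mp (hQ.commutator_eq_bot_of_isSubnormal' hsn hQN)

variable (G) in
/-- The layer `E(G)`, so that `F*(G) = F(G) ⊔ E(G)`. -/
def layer : Subgroup G :=
  sSup {Q : Subgroup G | Q.IsSubnormal' ∧ IsQuasisimple Q}

lemma layer_le_sup_centralizer (N : Subgroup G) [N.Normal] : layer G ≤ N ⊔ centralizer N :=
  sSup_le fun _ ⟨hsn, hQ⟩ => (hQ.le_or_le_centralizer_of_isSubnormal' hsn N).elim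
    (·.trans le_sup_left) (·.trans le_sup_right)

end Components

section PGroups

variable {G : Type*} [Group G]

lemma Subgroup.eq_top_of_forall_exists_sylow_le [Finite G] {K : Subgroup G}
    (h : ∀ p, p.Prime → ∃ P : Sylow p G, (P : Subgroup G) ≤ K) : K = ⊤ := by
  refine index_eq_one.mp (Nat.eq_one_iff_not_exists_prime_dvd.mpr fun p hp hdvd => ?_)
  have := Fact.mk hp
  obtain ⟨P, hPK⟩ := h p hp
  exact P.not_dvd_index (hdvd.trans (index_dvd_of_le hPK))

lemma exists_normal_isPGroup_not_le_of_not_fittingSubgroup_le [Finite G] {K : Subgroup G}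
    (hK : ¬ fittingSubgroup G ≤ K) :
    ∃ p, p.Prime ∧ ∃ P : Subgroup G, P.Normal ∧ IsPGroup p P ∧ ¬ P ≤ K := by
  obtain ⟨M, hMn, hM, hMK⟩ : ∃ M : Subgroup G, M.Normal ∧ Group.IsNilpotent M ∧ ¬ M ≤ K := by
    simpa [fittingSubgroup, sSup_le_iff] using hK
  by_contra! h
  refine hMK (subgroupOf_eq_top.mp (eq_top_of_forall_exists_sylow_le fun p hp => ?_))
  have := Fact.mk hp
  obtain ⟨S⟩ : Nonempty (Sylow p M) := inferInstance
  have hSylow_normal := ((Group.isNilpotent_of_finite_tfae (G := M)).out 0 3).mp hM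
  have : (S : Subgroup M).Characteristic :=
    S.characteristic_of_normal (hSylow_normal p ⟨hp⟩ S)
  exact ⟨S, map_le_iff_le_comap.mp (h p hp _ inferInstance (S.isPGroup'.map M.subtype))⟩

lemma isPGroup_of_disjoint_conjSubgroup {p : ℕ} {P T : Subgroup G} [hP : P.Normal]
    (hPp : IsPGroup p P) {g : G} (hg : g ∈ P) (hdisj : Disjoint (conjSubgroup g T) T)
    (hcent : conjSubgroup g T ≤ centralizer T) : IsPGroup p T := by
  rintro ⟨t, ht⟩
  have hconj : g * t * g⁻¹ ∈ conjSubgroup g T := conj_mem_conjSubgroup g ht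
  have hcommute : Commute t⁻¹ (g * t * g⁻¹) :=
    mem_centralizer_iff.mp (hcent hconj) t⁻¹ (T.inv_mem ht)
  have hmem : t⁻¹ * (g * t * g⁻¹) ∈ P := by
    simpa only [inv_inv, mul_assoc] using P.mul_mem (hP.conj_mem g hg t⁻¹) (P.inv_mem hg)
  obtain ⟨k, hk⟩ := hPp ⟨_, hmem⟩
  have hfixed : g * t ^ p ^ k * g⁻¹ = t ^ p ^ k := by
    have := congrArg Subtype.val hk
    simp only [SubmonoidClass.coe_pow, OneMemClass.coe_one] at this
    rw [hcommute.mul_pow, inv_pow, conj_pow] at this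
    exact (inv_mul_eq_one.mp this).symm
  refine ⟨k, Subtype.ext ?_⟩
  have hconj_pow := conj_mem_conjSubgroup g (T.pow_mem ht (p ^ k))
  rw [hfixed] at hconj_pow
  exact disjoint_def.mp hdisj hconj_pow (T.pow_mem ht _)

end PGroups

/-- **Lemma 2.2.** Suppose `T` is a subgroup of a finite group `H` whose normal
closure `⟨T^H⟩` is the direct product of conjugates `T^{x 1} × ⋯ × T^{x n}`,
every conjugate of `T` appears among these factors, and `H = F*(H)⟨T^H⟩`.
Then either `T` is normal in `H`, or `T` is a `p`-group for some prime `p`. -/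
theorem normal_or_isPGroup_of_normalClosure_eq_directProduct
    {H : Type*} [Group H] [Finite H] (T : Subgroup H) (n : ℕ) (x : Fin n → H)
    (hclosure : Subgroup.normalClosure (T : Set H) = ⨆ i, conjSubgroup (x i) T)
    (hindep : iSupIndep fun i => conjSubgroup (x i) T)
    (hcomm : ∀ i j, i ≠ j →
      ∀ a ∈ conjSubgroup (x i) T, ∀ b ∈ conjSubgroup (x j) T, a * b = b * a)
    (hall : ∀ y : H, ∃ i, conjSubgroup y T = conjSubgroup (x i) T)
    (hfact : generalizedFitting H ⊔ Subgroup.normalClosure (T : Set H) = ⊤) :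
    T.Normal ∨ ∃ p : ℕ, p.Prime ∧ IsPGroup p T := by
  refine or_iff_not_imp_left.mpr fun hTn => ?_
  obtain ⟨j, hj⟩ := hall 1
  have hjT : conjSubgroup (x j) T = T := by rw [← hj, conjSubgroup_one]
  have hcentral : ∀ i, i ≠ j → conjSubgroup (x i) T ≤ centralizer T := fun i hij a ha =>
    mem_centralizer_iff.mpr fun b hb => (hcomm i j hij a ha b (by rwa [hjT])).symm
  have hclosureK : normalClosure (T : Set H) ≤ normalizer (T : Set H) :=
    normalClosure_le_normalizer_of_eq_iSup hclosure fun i =>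
      (eq_or_ne i j).imp (fun h : i = j => h ▸ hjT) (hcentral i)
  have hlayerK : layer H ≤ normalizer (T : Set H) := (layer_le_sup_centralizer _).trans <|
    sup_le hclosureK ((centralizer_le subset_normalClosure).trans (centralizer_le_normalizer _))
  have hfittingK : ¬ fittingSubgroup H ≤ normalizer (T : Set H) := fun hle =>
    hTn (normalizer_eq_top_iff.mp (top_unique (hfact ▸ sup_le (sup_le hle hlayerK) hclosureK)))
  obtain ⟨p, hp, P, hPn, hPp, hPK⟩ :=
    exists_normal_isPGroup_not_le_of_not_fittingSubgroup_le hfittingK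
  obtain ⟨g, hgP, hgK⟩ := SetLike.not_le_iff_exists.mp hPK
  obtain ⟨i, hi⟩ := hall g
  have hij : i ≠ j := fun h => hgK (mem_normalizer_of_conjSubgroup_eq (by rw [hi, h, hjT]))
  have hdisj : Disjoint (conjSubgroup (x i) T) (conjSubgroup (x j) T) :=
    hindep.pairwiseDisjoint hij
  rw [hjT, ← hi] at hdisj
  exact ⟨p, hp, isPGroup_of_disjoint_conjSubgroup hPp hgP hdisj (hi ▸ hcentral i hij)⟩
end

section
/- Let G = AB be a finite group factorized by subgroups A and B of coprime orders, and let N be a normal subgroup of G. Then N = (N ∩ A)(N ∩ B). -/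
open Subgroup

open scoped Pointwise

/-! Since `N` is normal, `|A : A ∩ N|` and `|B : B ∩ N|` both divide `|G : N|`; they divide the
coprime numbers `|A|` and `|B|`, so their product divides `|G : N| = |A| |B| / |N|`, which gives
`|N| ∣ |N ∩ A| |N ∩ B|`. Conversely `|N ∩ A|` and `|N ∩ B|` are coprime divisors of `|N|`.
Hence `|N| = |N ∩ A| |N ∩ B|`, and as `N ∩ A` and `N ∩ B` meet trivially, the product set
`(N ∩ A)(N ∩ B) ⊆ N` has `|N|` elements. -/

namespace Subgroup

variable {G : Type*} [Group G]

theorem card_inf_mul_relIndex (H K : Subgroup G) :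
    Nat.card (H ⊓ K : Subgroup G) * H.relIndex K = Nat.card K := by
  rw [← relIndex_bot_left, ← relIndex_bot_left, ← inf_relIndex_right H K,
    relIndex_mul_relIndex _ _ _ bot_le inf_le_right]

theorem coe_eq_mul_of_disjoint_of_card_mul_eq {H K N : Subgroup G} [Finite N]
    (hH : H ≤ N) (hK : K ≤ N) (hdisj : Disjoint H K)
    (hcard : Nat.card H * Nat.card K = Nat.card N) : (N : Set G) = H * K := by
  let f : H × K → N := fun p => ⟨p.1 * p.2, N.mul_mem (hH p.1.2) (hK p.2.2)⟩
  have hf : Function.Bijective f := (Nat.bijective_iff_injective_and_card f).mpr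
    ⟨fun p q hpq => mul_injective_of_disjoint hdisj (congrArg Subtype.val hpq),
      (Nat.card_prod H K).trans hcard⟩
  refine Set.Subset.antisymm (fun g hg => ?_) ?_
  · obtain ⟨⟨h, k⟩, hhk⟩ := hf.2 ⟨g, hg⟩
    exact ⟨h, h.2, k, k.2, congrArg Subtype.val hhk⟩
  · rintro _ ⟨h, hh, k, hk, rfl⟩
    exact N.mul_mem (hH hh) (hK hk)

theorem card_eq_card_inf_mul_card_inf [Finite G] {A B : Subgroup G}
    (hcard : Nat.card A * Nat.card B = Nat.card G) (hcop : (Nat.card A).Coprime (Nat.card B))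
    (N : Subgroup G) [N.Normal] :
    Nat.card N = Nat.card (N ⊓ A : Subgroup G) * Nat.card (N ⊓ B : Subgroup G) := by
  have hA := card_inf_mul_relIndex N A
  have hB := card_inf_mul_relIndex N B
  have hindex : N.relIndex A * N.relIndex B ∣ N.index :=
    (hcop.of_dvd (relIndex_dvd_card N A) (relIndex_dvd_card N B)).mul_dvd_of_dvd_of_dvd
      (relIndex_dvd_index_of_normal N A) (relIndex_dvd_index_of_normal N B)
  have hpos : 0 < N.relIndex A * N.relIndex B :=
    Nat.mul_pos (Nat.pos_of_dvd_of_pos (relIndex_dvd_card N A) Nat.card_pos)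
      (Nat.pos_of_dvd_of_pos (relIndex_dvd_card N B) Nat.card_pos)
  have hcop_inf : (Nat.card (N ⊓ A : Subgroup G)).Coprime (Nat.card (N ⊓ B : Subgroup G)) :=
    hcop.of_dvd (card_dvd_of_le inf_le_right) (card_dvd_of_le inf_le_right)
  refine Nat.dvd_antisymm (Nat.dvd_of_mul_dvd_mul_right hpos ?_)
    (hcop_inf.mul_dvd_of_dvd_of_dvd (card_dvd_of_le inf_le_left) (card_dvd_of_le inf_le_left))
  calc Nat.card N * (N.relIndex A * N.relIndex B) ∣ Nat.card N * N.index :=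
        mul_dvd_mul_left _ hindex
    _ = Nat.card A * Nat.card B := by rw [card_mul_index, hcard]
    _ = _ := by rw [← hA, ← hB]; ring

end Subgroup

/-- **Lemma 2.4.** If `G = AB` is a finite group factorized by subgroups of
coprime orders and `N` is a normal subgroup of `G`, then `N = (N ∩ A)(N ∩ B)`. -/
theorem normal_eq_inf_mul_inf_of_coprime_factorization
    {G : Type*} [Group G] [Finite G] (A B N : Subgroup G)
    (hfact : ∀ g : G, ∃ a ∈ A, ∃ b ∈ B, g = a * b)
    (hcop : Nat.Coprime (Nat.card A) (Nat.card B))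
    (hN : N.Normal) :
    (N : Set G) = (↑(N ⊓ A) : Set G) * (↑(N ⊓ B) : Set G) := by
  have hdisj : Disjoint A B := disjoint_of_coprime_natCard hcop
  have hAB : A.IsComplement' B := isComplement'_of_disjoint_and_mul_eq_univ hdisj <|
    Set.eq_univ_of_forall fun g => by
      obtain ⟨a, ha, b, hb, rfl⟩ := hfact g
      exact Set.mul_mem_mul ha hb
  exact coe_eq_mul_of_disjoint_of_card_mul_eq inf_le_left inf_le_left
    (hdisj.mono inf_le_right inf_le_right)
    (card_eq_card_inf_mul_card_inf hAB.card_mul_card hcop N).symm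
end
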